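/- arXiv:math/0608299 — 3 statements merged into one kernel-verified Lean document; each statement's English description precedes it below -/
import Mathlib

section
/- For three points x_i, x_j, x_k in R^d with d ≥ 2, not all collinear, the quantity b_{ijk} = ⟨x_i−x_j, x_i−x_k⟩/(r_{ij}² r_{ik}²) + ⟨x_j−x_i, x_j−x_k⟩/(r_{ij}² r_{jk}²) + ⟨x_k−x_i, x_k−x_j⟩/(r_{ik}² r_{jk}²) equals 1/(2R²), where R is the circumradius of the triangle with vertices x_i, x_j, x_k. -/
/-!
Write `u = x_j - x_i`, `v = x_k - x_i`. Clearing denominators, the three terms add up to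
`2 (‖u‖²‖v‖² - ⟪u, v⟫²) / (‖u‖² ‖v‖² ‖u - v‖²)`. The law of sines `r_{jk} = 2R sin φ`, together with
`sin² φ · ‖u‖²‖v‖² = ‖u‖²‖v‖² - ⟪u, v⟫²`, identifies this with `1 / (2R²)`.
-/

open EuclideanGeometry InnerProductGeometry

section

variable {V P : Type*} [NormedAddCommGroup V] [InnerProductSpace ℝ V] [MetricSpace P]
  [NormedAddTorsor V P]

theorem InnerProductGeometry.sin_sq_angle_mul_norm_sq_mul_norm_sq (x y : V) :
    Real.sin (angle x y) ^ 2 * (‖x‖ ^ 2 * ‖y‖ ^ 2) = ‖x‖ ^ 2 * ‖y‖ ^ 2 - inner ℝ x y ^ 2 := by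
  rw [Real.sin_sq, ← cos_angle_mul_norm_mul_norm]
  ring

theorem inner_div_add_inner_sub_div_add_inner_sub_div {u v : V} (hu : u ≠ 0) (hv : v ≠ 0)
    (huv : u ≠ v) :
    inner ℝ u v / (‖u‖ ^ 2 * ‖v‖ ^ 2) + inner ℝ u (u - v) / (‖u‖ ^ 2 * ‖u - v‖ ^ 2) +
        inner ℝ v (v - u) / (‖v‖ ^ 2 * ‖u - v‖ ^ 2) =
      2 * (‖u‖ ^ 2 * ‖v‖ ^ 2 - inner ℝ u v ^ 2) / (‖u‖ ^ 2 * ‖v‖ ^ 2 * ‖u - v‖ ^ 2) := by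
  have hu' : ‖u‖ ≠ 0 := norm_ne_zero_iff.2 hu
  have hv' : ‖v‖ ≠ 0 := norm_ne_zero_iff.2 hv
  have huv' : ‖u - v‖ ≠ 0 := norm_ne_zero_iff.2 (sub_ne_zero.2 huv)
  field_simp
  rw [norm_sub_sq_real, inner_sub_right, inner_sub_right, real_inner_self_eq_norm_sq,
    real_inner_self_eq_norm_sq, real_inner_comm v u]
  ring

theorem EuclideanGeometry.sum_inner_vsub_div_dist_sq {a b c : P} (hab : a ≠ b) (hac : a ≠ c)
    (hbc : b ≠ c) :
    inner ℝ (a -ᵥ b) (a -ᵥ c) / (dist a b ^ 2 * dist a c ^ 2) +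
        inner ℝ (b -ᵥ a) (b -ᵥ c) / (dist a b ^ 2 * dist b c ^ 2) +
        inner ℝ (c -ᵥ a) (c -ᵥ b) / (dist a c ^ 2 * dist b c ^ 2) =
      2 * (dist a b ^ 2 * dist a c ^ 2 - inner ℝ (b -ᵥ a) (c -ᵥ a) ^ 2) /
        (dist a b ^ 2 * dist a c ^ 2 * dist b c ^ 2) := by
  rw [← neg_vsub_eq_vsub_rev b a, ← neg_vsub_eq_vsub_rev c a, inner_neg_neg,
    ← vsub_sub_vsub_cancel_right b c a, ← vsub_sub_vsub_cancel_right c b a,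
    dist_comm a b, dist_comm a c, dist_eq_norm_vsub V b a, dist_eq_norm_vsub V c a,
    dist_eq_norm_vsub V b c, ← vsub_sub_vsub_cancel_right b c a]
  exact inner_div_add_inner_sub_div_add_inner_sub_div (vsub_ne_zero.2 hab.symm)
    (vsub_ne_zero.2 hac.symm) fun h => hbc (vsub_left_cancel h)

namespace Affine.Triangle

theorem four_mul_circumradius_sq_mul (t : Triangle ℝ P) :
    4 * t.circumradius ^ 2 *
        (dist (t.points 0) (t.points 1) ^ 2 * dist (t.points 0) (t.points 2) ^ 2 -
          inner ℝ (t.points 1 -ᵥ t.points 0) (t.points 2 -ᵥ t.points 0) ^ 2) =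
      dist (t.points 0) (t.points 1) ^ 2 * dist (t.points 0) (t.points 2) ^ 2 *
        dist (t.points 1) (t.points 2) ^ 2 := by
  have hsine := t.dist_div_sin_angle_eq_two_mul_circumradius
    (i₁ := 1) (i₂ := 0) (i₃ := 2) (by decide) (by decide) (by decide)
  have hsin : Real.sin (∠ (t.points 1) (t.points 0) (t.points 2)) ≠ 0 := by
    intro h0
    rw [h0, div_zero] at hsine
    linarith [t.circumradius_pos]
  rw [dist_comm (t.points 0) (t.points 1), dist_comm (t.points 0) (t.points 2),
    dist_eq_norm_vsub V (t.points 1), dist_eq_norm_vsub V (t.points 2),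
    ← sin_sq_angle_mul_norm_sq_mul_norm_sq,
    show 4 * t.circumradius ^ 2 = (2 * t.circumradius) ^ 2 by ring, ← hsine]
  simp only [EuclideanGeometry.angle] at hsin ⊢
  field_simp

theorem sum_inner_vsub_div_dist_sq_eq_one_div_two_mul_circumradius_sq (t : Triangle ℝ P) :
    inner ℝ (t.points 0 -ᵥ t.points 1) (t.points 0 -ᵥ t.points 2) /
          (dist (t.points 0) (t.points 1) ^ 2 * dist (t.points 0) (t.points 2) ^ 2) +
        inner ℝ (t.points 1 -ᵥ t.points 0) (t.points 1 -ᵥ t.points 2) /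
          (dist (t.points 0) (t.points 1) ^ 2 * dist (t.points 1) (t.points 2) ^ 2) +
        inner ℝ (t.points 2 -ᵥ t.points 0) (t.points 2 -ᵥ t.points 1) /
          (dist (t.points 0) (t.points 2) ^ 2 * dist (t.points 1) (t.points 2) ^ 2) =
      1 / (2 * t.circumradius ^ 2) := by
  have hne {i j : Fin 3} (hij : i ≠ j) : t.points i ≠ t.points j := t.independent.injective.ne hij
  rw [sum_inner_vsub_div_dist_sq (hne (by decide)) (hne (by decide)) (hne (by decide)),
    div_eq_div_iff (by simp [hne]) (by simp [t.circumradius_pos.ne'])]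
  linear_combination t.four_mul_circumradius_sq_mul

end Affine.Triangle

end

theorem stmt_1_general (d : ℕ) (a b c : EuclideanSpace ℝ (Fin d))
    (h : AffineIndependent ℝ ![a, b, c]) :
    (inner ℝ (a - b) (a - c) : ℝ) / (dist a b ^ 2 * dist a c ^ 2)
      + (inner ℝ (b - a) (b - c) : ℝ) / (dist a b ^ 2 * dist b c ^ 2)
      + (inner ℝ (c - a) (c - b) : ℝ) / (dist a c ^ 2 * dist b c ^ 2)
      = 1 / (2 * (Affine.Simplex.mk ![a, b, c] h).circumradius ^ 2) :=
  Affine.Triangle.sum_inner_vsub_div_dist_sq_eq_one_div_two_mul_circumradius_sq ⟨![a, b, c], h⟩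

theorem stmt_1 (d : ℕ) (hd : 2 ≤ d) (a b c : EuclideanSpace ℝ (Fin d))
    (h : AffineIndependent ℝ ![a, b, c]) :
    (inner ℝ (a - b) (a - c) : ℝ) / (dist a b ^ 2 * dist a c ^ 2)
      + (inner ℝ (b - a) (b - c) : ℝ) / (dist a b ^ 2 * dist b c ^ 2)
      + (inner ℝ (c - a) (c - b) : ℝ) / (dist a c ^ 2 * dist b c ^ 2)
      = 1 / (2 * (Affine.Simplex.mk ![a, b, c] h).circumradius ^ 2) :=
  stmt_1_general d a b c h
end

section
/- If α, β, γ are nonnegative reals with α + β + γ = π, then sin²α + sin²β + sin²γ ≤ 9/4, with equality iff α = β = γ = π/3. -/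
set_option maxHeartbeats 1000000

theorem stmt_5 (α β γ : ℝ) (hα : 0 ≤ α) (hβ : 0 ≤ β) (hγ : 0 ≤ γ)
    (hsum : α + β + γ = Real.pi) :
    Real.sin α ^ 2 + Real.sin β ^ 2 + Real.sin γ ^ 2 ≤ 9 / 4 ∧
      (Real.sin α ^ 2 + Real.sin β ^ 2 + Real.sin γ ^ 2 = 9 / 4 ↔
        α = Real.pi / 3 ∧ β = Real.pi / 3 ∧ γ = Real.pi / 3) := by
  have hαπ : α ≤ Real.pi := by linarith
  have hβπ : β ≤ Real.pi := by linarith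
  have hγeq : γ = Real.pi - (α + β) := by linarith
  have hsγ : Real.sin γ = Real.sin α * Real.cos β + Real.cos α * Real.sin β := by
    rw [hγeq, Real.sin_pi_sub, Real.sin_add]
  set s1 := Real.sin α with hs1def
  set s2 := Real.sin β with hs2def
  set c1 := Real.cos α with hc1def
  set c2 := Real.cos β with hc2def
  have p1 : s1 ^ 2 + c1 ^ 2 = 1 := Real.sin_sq_add_cos_sq α
  have p2 : s2 ^ 2 + c2 ^ 2 = 1 := Real.sin_sq_add_cos_sq β
  have hs1 : 0 ≤ s1 := Real.sin_nonneg_of_nonneg_of_le_pi hα hαπ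
  have hs2 : 0 ≤ s2 := Real.sin_nonneg_of_nonneg_of_le_pi hβ hβπ
  have hs3 : 0 ≤ s1 * c2 + c1 * s2 := by
    rw [← hsγ]; exact Real.sin_nonneg_of_nonneg_of_le_pi hγ (by linarith)
  rw [hsγ]
  constructor
  · rcases le_or_gt 0 (c1 * c2) with hu | hu
    · nlinarith [sq_nonneg (2 * (c1 * c2) - 1 / 2),
        mul_nonneg hu (sq_nonneg (c1 - c2)), mul_nonneg hu (sq_nonneg (s1 - s2))]
    · nlinarith [mul_nonneg (neg_nonneg.2 hu.le) (mul_nonneg hs1 hs2),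
        sq_nonneg (c1 * c2)]
  · constructor
    · intro heq
      have huv : c1 * c2 * (s1 * s2) = (c1 * c2) ^ 2 + 1 / 8 := by
        linear_combination (1/2) * heq - ((1 + c2 ^ 2) / 2) * p1 - ((1 + c1 ^ 2) / 2) * p2
      have hu : 0 < c1 * c2 := by
        by_contra h
        push_neg at h
        have h2 : c1 * c2 * (s1 * s2) ≤ 0 :=
          mul_nonpos_of_nonpos_of_nonneg h (mul_nonneg hs1 hs2)
        nlinarith [sq_nonneg (c1 * c2)]
      have key : (2 * (c1 * c2) - 1 / 2) ^ 2
          + (c1 * c2) * ((c1 - c2) ^ 2 + (s1 - s2) ^ 2) = 0 := by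
        linear_combination (-2) * huv + (c1 * c2) * p1 + (c1 * c2) * p2
      have hB : (c1 - c2) ^ 2 + (s1 - s2) ^ 2 ≤ 0 := by
        have h2 : c1 * c2 * ((c1 - c2) ^ 2 + (s1 - s2) ^ 2) ≤ c1 * c2 * 0 := by
          rw [mul_zero]; linarith [key, sq_nonneg (2 * (c1 * c2) - 1 / 2)]
        exact le_of_mul_le_mul_left h2 hu
      have hcc : c1 = c2 := by
        have : (c1 - c2) ^ 2 = 0 := le_antisymm (by linarith [hB, sq_nonneg (s1 - s2)]) (sq_nonneg _)
        have := pow_eq_zero_iff (n := 2) (by norm_num) |>.mp this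
        linarith
      have hss : s1 = s2 := by
        have : (s1 - s2) ^ 2 = 0 := le_antisymm (by linarith [hB, sq_nonneg (c1 - c2)]) (sq_nonneg _)
        have := pow_eq_zero_iff (n := 2) (by norm_num) |>.mp this
        linarith
      rw [← hcc, ← hss] at huv hs3
      have hc1sq : (4 * c1 ^ 2 - 1) ^ 2 = 0 := by
        linear_combination (-8) * huv + 8 * c1 ^ 2 * p1
      have hc1sq' : c1 ^ 2 = 1 / 4 := by
        have := pow_eq_zero_iff (n := 2) (by norm_num) |>.mp hc1sq
        linarith
      have hs1pos : 0 < s1 := by nlinarith [p1]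
      have hc1pos : 0 ≤ c1 := by
        by_contra h
        push_neg at h
        nlinarith [mul_pos hs1pos (neg_pos.2 h)]
      have hc1 : c1 = 1 / 2 := by
        have h0 : (2 * c1 - 1) * (2 * c1 + 1) = 0 := by linear_combination 4 * hc1sq'
        rcases mul_eq_zero.mp h0 with h' | h' <;> linarith
      have hA : α = Real.pi / 3 := by
        refine Real.injOn_cos ⟨hα, hαπ⟩ ⟨by positivity, by linarith [Real.pi_pos]⟩ ?_
        rw [Real.cos_pi_div_three]; exact hc1
      have hB : β = Real.pi / 3 := by
        refine Real.injOn_cos ⟨hβ, hβπ⟩ ⟨by positivity, by linarith [Real.pi_pos]⟩ ?_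
        rw [Real.cos_pi_div_three, ← hc2def, ← hcc]; exact hc1
      exact ⟨hA, hB, by linarith⟩
    · rintro ⟨rfl, rfl, rfl⟩
      simp only [hs1def, hs2def, hc1def, hc2def, Real.sin_pi_div_three, Real.cos_pi_div_three]
      have h3 : Real.sqrt 3 ^ 2 = 3 := Real.sq_sqrt (by norm_num)
      linear_combination (3 / 4) * h3
end

section
/- For pairwise distinct real numbers x_1, …, x_N, the vector field F on R^N with components F_j = Σ_{k≠j} 1/(x_j − x_k) satisfies |F|² = Σ_{j=1}^N (Σ_{k≠j} 1/(x_j − x_k))² = 2 Σ_{1≤i<j≤N} 1/(x_i − x_j)². -/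
open Finset

lemma cyc3 {α : Type*} [Fintype α] (H : α → α → α → ℝ) :
    ∑ a : α, ∑ b : α, ∑ c : α, H a b c = ∑ a : α, ∑ b : α, ∑ c : α, H b c a :=
  calc ∑ a : α, ∑ b : α, ∑ c : α, H a b c
      = ∑ a : α, ∑ c : α, ∑ b : α, H a b c :=
        Finset.sum_congr rfl fun _ _ => Finset.sum_comm
    _ = ∑ c : α, ∑ a : α, ∑ b : α, H a b c := Finset.sum_comm

theorem stmt_14 (N : ℕ) (x : Fin N → ℝ) (hx : Function.Injective x) :
    ∑ j, (∑ k ∈ Finset.univ.filter (fun k => k ≠ j), 1 / (x j - x k)) ^ 2 =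
      2 * ∑ i, ∑ j ∈ Finset.univ.filter (fun j => i < j), 1 / (x i - x j) ^ 2 := by
  classical
  have hxne : ∀ {j k : Fin N}, j ≠ k → x j - x k ≠ 0 := fun h =>
    sub_ne_zero.mpr (fun he => h (hx he))
  have expand : ∀ j : Fin N,
      (∑ k ∈ Finset.univ.filter (fun k => k ≠ j), 1 / (x j - x k)) ^ 2 =
        (∑ k ∈ Finset.univ.filter (fun k => k ≠ j), (1 / (x j - x k)) ^ 2) +
        ∑ k ∈ Finset.univ.filter (fun k => k ≠ j),
          ∑ l ∈ (Finset.univ.filter (fun l => l ≠ j)).erase k,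
            (1 / (x j - x k)) * (1 / (x j - x l)) := by
    intro j
    rw [sq, Finset.sum_mul_sum, ← Finset.sum_add_distrib]
    refine Finset.sum_congr rfl fun k hk => ?_
    rw [← Finset.add_sum_erase _ _ hk, ← sq]
  simp only [expand, Finset.sum_add_distrib]
  -- the cross terms vanish
  set g : Fin N → Fin N → Fin N → ℝ := fun j k l =>
    if k ≠ j ∧ l ≠ j ∧ l ≠ k then (1 / (x j - x k)) * (1 / (x j - x l)) else 0 with hg
  have herase : ∀ j k : Fin N,
      (Finset.univ.filter (fun l => l ≠ j)).erase k
        = Finset.univ.filter (fun l => l ≠ j ∧ l ≠ k) := by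
    intro j k; ext l; simp [and_comm]
  have hS : (∑ j, ∑ k ∈ Finset.univ.filter (fun k => k ≠ j),
        ∑ l ∈ (Finset.univ.filter (fun l => l ≠ j)).erase k,
          (1 / (x j - x k)) * (1 / (x j - x l)))
      = ∑ j, ∑ k, ∑ l, g j k l := by
    refine Finset.sum_congr rfl fun j _ => ?_
    rw [Finset.sum_filter]
    refine Finset.sum_congr rfl fun k _ => ?_
    by_cases hkj : k ≠ j
    · rw [if_pos hkj, herase, Finset.sum_filter]
      refine Finset.sum_congr rfl fun l _ => ?_
      simp [hg, hkj, and_assoc]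
    · simp only [if_neg hkj]
      rw [eq_comm, Finset.sum_eq_zero]
      intro l _
      simp [hg, hkj]
  have hzero : (∑ j, ∑ k, ∑ l, g j k l) = 0 := by
    have h1 : (∑ j, ∑ k, ∑ l, g j k l) = ∑ j, ∑ k, ∑ l, g k l j := cyc3 g
    have h2 : (∑ j, ∑ k, ∑ l, g k l j) = ∑ j, ∑ k, ∑ l, g l j k :=
      cyc3 (fun a b c => g b c a)
    have h3 : (∑ j, ∑ k, ∑ l, (g j k l + g k l j + g l j k)) = 0 := by
      refine Finset.sum_eq_zero fun j _ => Finset.sum_eq_zero fun k _ =>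
        Finset.sum_eq_zero fun l _ => ?_
      by_cases hd : j ≠ k ∧ j ≠ l ∧ k ≠ l
      · obtain ⟨h1, h2, h3⟩ := hd
        rw [hg]
        simp only [if_pos (⟨h1.symm, h2.symm, h3.symm⟩ : k ≠ j ∧ l ≠ j ∧ l ≠ k),
          if_pos (⟨h3.symm, h1, h2⟩ : l ≠ k ∧ j ≠ k ∧ j ≠ l),
          if_pos (⟨h2, h3, h1.symm⟩ : j ≠ l ∧ k ≠ l ∧ k ≠ j)]
        have a1 := hxne h1
        have a2 := hxne h2
        have a3 := hxne h3
        have b1 := hxne h1.symm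
        have b2 := hxne h2.symm
        have b3 := hxne h3.symm
        field_simp
        ring
      · by_cases e1 : j = k
        · subst e1; simp [hg]
        by_cases e2 : j = l
        · subst e2; simp [hg]
        by_cases e3 : k = l
        · subst e3; simp [hg]
        · exact absurd ⟨e1, e2, e3⟩ hd
    simp only [Finset.sum_add_distrib] at h3
    linarith [h3, h1, h2]
  rw [hS, hzero, add_zero]
  -- the diagonal terms
  have hsplit : ∀ j : Fin N,
      (Finset.univ.filter (fun k => k ≠ j)) =
        (Finset.univ.filter (fun k => j < k)) ∪ (Finset.univ.filter (fun k => k < j)) := by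
    intro j; ext k
    simp only [Finset.mem_filter, Finset.mem_union, Finset.mem_univ, true_and]
    constructor
    · intro h; exact (lt_or_gt_of_ne h).symm
    · rintro (h | h)
      · exact h.ne'
      · exact h.ne
  have hdisj : ∀ j : Fin N,
      Disjoint (Finset.univ.filter (fun k => j < k)) (Finset.univ.filter (fun k => k < j)) := by
    intro j
    simp only [Finset.disjoint_filter]
    intro k _ h1 h2
    exact absurd (h1.trans h2) (lt_irrefl j)
  have hsym : ∀ a b : ℝ, (1 / (a - b)) ^ 2 = 1 / (a - b) ^ 2 := by
    intro a b; rw [div_pow, one_pow]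
  have hswap : (∑ j, ∑ k ∈ Finset.univ.filter (fun k => k < j), (1 / (x j - x k)) ^ 2)
      = ∑ j, ∑ k ∈ Finset.univ.filter (fun k => j < k), (1 / (x j - x k)) ^ 2 := by
    simp only [Finset.sum_filter]
    rw [Finset.sum_comm]
    refine Finset.sum_congr rfl fun j _ => Finset.sum_congr rfl fun k _ => ?_
    by_cases h : j < k
    · rw [if_pos h, if_pos h, div_pow, div_pow]
      have : (x k - x j) ^ 2 = (x j - x k) ^ 2 := by ring
      rw [this]
    · rw [if_neg h, if_neg h]
  calc (∑ j, ∑ k ∈ Finset.univ.filter (fun k => k ≠ j), (1 / (x j - x k)) ^ 2)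
      = ∑ j, ((∑ k ∈ Finset.univ.filter (fun k => j < k), (1 / (x j - x k)) ^ 2) +
          ∑ k ∈ Finset.univ.filter (fun k => k < j), (1 / (x j - x k)) ^ 2) := by
        refine Finset.sum_congr rfl fun j _ => ?_
        rw [hsplit j, Finset.sum_union (hdisj j)]
    _ = 2 * ∑ i, ∑ j ∈ Finset.univ.filter (fun j => i < j), 1 / (x i - x j) ^ 2 := by
        rw [Finset.sum_add_distrib, hswap, two_mul]
        simp [hsym]
end
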